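/- arXiv:2311.12633 — 5 statements merged into one kernel-verified Lean document; each statement's English description precedes it below -/
import Mathlib

section
/- Let G be a finite group, N a normal subgroup of G with gcd(|N|, p) = 1, and P a p-subgroup of G. Then N_{G/N}(PN/N) = N_G(P)N/N. -/
/-!
Put `H = P ⊔ N`. The preimage of `N_{G/N}(PN/N)` in `G` is `N_G(H)`. The index of `P` in `H`
equals the index of `P ⊓ N` in `N`, so it is prime to `p` and `P` is a Sylow `p`-subgroup of `H`.
By the Frattini argument every `g ∈ N_G(H)` lies in `N_G(P) H = N_G(P) N`, since `gPg⁻¹` is again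
Sylow in `H` and hence `H`-conjugate to `P`.
-/

open Subgroup Pointwise

namespace Subgroup

variable {G : Type*} [Group G]

theorem relIndex_sup_of_normal (H N : Subgroup G) [N.Normal] [N.IsFiniteRelIndex H] :
    H.relIndex (H ⊔ N) = H.relIndex N := by
  -- both sides, multiplied by `N.relIndex H`, give `(H ⊓ N).relIndex (H ⊔ N)`
  have h₁ := relIndex_inf_mul_relIndex H N (H ⊔ N)
  have h₂ := relIndex_inf_mul_relIndex N H (H ⊔ N)
  rw [inf_of_le_left le_sup_right, relIndex_sup_right] at h₁
  rw [inf_of_le_left le_sup_left, inf_comm, ← h₁, mul_comm (H.relIndex N)] at h₂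
  exact Nat.eq_of_mul_eq_mul_left (Nat.pos_of_ne_zero relIndex_ne_zero) h₂

theorem conj_smul_eq_self_iff {H : Subgroup G} {g : G} :
    MulAut.conj g • H = H ↔ g ∈ normalizer (H : Set G) :=
  conjAct_pointwise_smul_iff

theorem not_dvd_relIndex_sup_of_coprime {p : ℕ} (hp : p.Prime) (H N : Subgroup G) [N.Normal]
    [N.IsFiniteRelIndex H] (hN : (Nat.card N).Coprime p) : ¬ p ∣ H.relIndex (H ⊔ N) := by
  rw [relIndex_sup_of_normal]
  exact fun hdvd ↦ (hp.coprime_iff_not_dvd.mp hN.symm) (hdvd.trans (relIndex_dvd_card H N))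

theorem normalizer_map_eq_map_normalizer_sup_ker {G' : Type*} [Group G'] {f : G →* G'}
    (hf : Function.Surjective f) (H : Subgroup G) :
    normalizer (H.map f : Set G') = (normalizer ((H ⊔ f.ker : Subgroup G) : Set G)).map f := by
  rw [← comap_map_eq, ← comap_normalizer_eq_of_surjective _ hf,
    map_comap_eq_self_of_surjective hf]

variable {p : ℕ} [Fact p.Prime] {H : Subgroup G} [Finite (Sylow p H)]

theorem exists_conj_smul_eq_of_not_dvd_relIndex {P Q : Subgroup G}
    (hP : IsPGroup p P) (hPH : P ≤ H) (hPi : ¬ p ∣ P.relIndex H)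
    (hQ : IsPGroup p Q) (hQH : Q ≤ H) (hQi : ¬ p ∣ Q.relIndex H) :
    ∃ h ∈ H, MulAut.conj h • Q = P := by
  obtain ⟨h, hh⟩ := MulAction.exists_smul_eq H
    ((hQ.comap_subtype (K := H)).toSylow hQi) ((hP.comap_subtype (K := H)).toSylow hPi)
  replace hh : MulAut.conj h • Q.subgroupOf H = P.subgroupOf H := congrArg Sylow.toSubgroup hh
  rw [conj_smul_subgroupOf hQH, subgroupOf_inj, inf_of_le_left (conj_smul_le_of_le hQH h),
    inf_of_le_left hPH] at hh
  exact ⟨h, h.2, hh⟩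

theorem normalizer_le_normalizer_sup_of_not_dvd_relIndex {P : Subgroup G}
    (hP : IsPGroup p P) (hPH : P ≤ H) (hPi : ¬ p ∣ P.relIndex H) :
    normalizer (H : Set G) ≤ normalizer (P : Set G) ⊔ H := by
  intro g hg
  have hgH : MulAut.conj g • H = H := conj_smul_eq_self_iff.mpr hg
  have hQH : MulAut.conj g • P ≤ H := hgH ▸ pointwise_smul_le_pointwise_smul_iff.mpr hPH
  have hQi : ¬ p ∣ (MulAut.conj g • P).relIndex H := by
    rwa [← hgH, relIndex_pointwise_smul]
  have hQ : IsPGroup p ↥(MulAut.conj g • P) := hP.map (MulAut.conj g).toMonoidHom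
  obtain ⟨h, hH, hh⟩ := exists_conj_smul_eq_of_not_dvd_relIndex hP hPH hPi hQ hQH hQi
  have hhg : h * g ∈ normalizer (P : Set G) := by
    rw [← conj_smul_eq_self_iff, map_mul, mul_smul, hh]
  rw [sup_comm, ← inv_mul_cancel_left h g]
  exact mul_mem_sup (inv_mem hH) hhg

end Subgroup

/-- If `G` is a finite group, `N ⊴ G` with `gcd(|N|, p) = 1`, and `P` is a `p`-subgroup
of `G`, then `N_{G/N}(PN/N) = N_G(P)N/N`. -/
theorem normalizer_map_of_coprime (G : Type) [Group G] [Finite G] (p : ℕ) [Fact p.Prime]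
    (N : Subgroup G) [N.Normal] (hN : Nat.Coprime (Nat.card N) p)
    (P : Subgroup G) (hP : IsPGroup p P) :
    Subgroup.normalizer ((P.map (QuotientGroup.mk' N) : Subgroup (G ⧸ N)) : Set (G ⧸ N)) =
      (Subgroup.normalizer (P : Set G)).map (QuotientGroup.mk' N) := by
  have : N.IsFiniteRelIndex P := isFiniteRelIndex_of_finiteIndex
  have hPi := not_dvd_relIndex_sup_of_coprime Fact.out P N hN
  refine le_antisymm ?_ (le_normalizer_map _)
  rw [normalizer_map_eq_map_normalizer_sup_ker (QuotientGroup.mk'_surjective N),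
    QuotientGroup.ker_mk']
  calc _ ≤ (normalizer (P : Set G) ⊔ (P ⊔ N)).map (QuotientGroup.mk' N) :=
        map_mono (normalizer_le_normalizer_sup_of_not_dvd_relIndex hP le_sup_left hPi)
    _ = _ := by
      rw [← sup_assoc, sup_of_le_left le_normalizer, map_eq_map_iff, QuotientGroup.ker_mk',
        sup_assoc, sup_idem]
end

section
/- Let N be a nontrivial soluble normal subgroup of a finite group G. If every minimal normal subgroup of G contained in N is not contained in Φ(G), then the Fitting subgroup F(N) is a direct product of minimal normal subgroups of G contained in N. -/
/-- `A` is a minimal normal subgroup of `G`. -/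
def IsMinimalNormal (G : Type) [Group G] (A : Subgroup G) : Prop :=
  A.Normal ∧ A ≠ ⊥ ∧ ∀ B : Subgroup G, B.Normal → B ≤ A → B = ⊥ ∨ B = A

/-- The Fitting subgroup of a finite group: the join of all nilpotent normal subgroups. -/
def fittingSubgroup (G : Type) [Group G] : Subgroup G :=
  ⨆ H ∈ {H : Subgroup G | H.Normal ∧ Group.IsNilpotent H}, H

/-!
Since no minimal normal subgroup of `G` inside `N` lies in `Φ(G)`, we get `N ∩ Φ(G) = 1`, and
hence `Φ(N) = 1` because `Φ(N) ≤ Φ(G)`. In a finite group with trivial Frattini subgroup every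
nilpotent normal subgroup `H` is abelian (`H' ≤ Φ(H) ≤ Φ`), and the product of two abelian normal
subgroups is nilpotent of class at most two; so `F(N)` is abelian, and, being characteristic in
`N`, normal in `G`.

An abelian normal subgroup `A` with `A ∩ Φ(G) = 1` has a complement (Gaschütz): if `K` is minimal
with `AK = G`, then `A ∩ K` is normal in `G` and non-generating in `K`, hence lies in `Φ(G)`.
Splitting off a minimal normal subgroup `B ≤ A` with complement `K` leaves the smaller abelian
normal subgroup `A ∩ K` with `A = B × (A ∩ K)`, and induction writes `A`, in particular `F(N)`,
as a direct product of minimal normal subgroups of `G`.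
-/

namespace Subgroup

variable {G : Type*} [Group G]

theorem isMulCommutative_of_le {H K : Subgroup G} (hHK : H ≤ K) [IsMulCommutative K] :
    IsMulCommutative H :=
  le_centralizer_iff_isMulCommutative.mp
    (hHK.trans ((le_centralizer_iff_isMulCommutative.mpr ‹_›).trans (centralizer_le hHK)))

-- The lattice of subgroups is not modular, but the modular law holds when `x` is normal.
theorem sup_inf_assoc_of_le_of_normal {x y z : Subgroup G} [x.Normal] (h : x ≤ z) :
    (x ⊔ y) ⊓ z = x ⊔ y ⊓ z :=
  SetLike.coe_injective <| by rw [coe_inf, normal_mul, normal_mul, mul_inf_assoc x y z h]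

theorem disjoint_sup_right_of_disjoint_sup_left {a b c : Subgroup G} [b.Normal]
    (h : Disjoint a b) (hsup : Disjoint (a ⊔ b) c) : Disjoint a (b ⊔ c) := by
  rw [disjoint_iff_inf_le]
  calc a ⊓ (b ⊔ c) ≤ a ⊓ ((b ⊔ c) ⊓ (b ⊔ a)) :=
        le_inf inf_le_left (le_inf inf_le_right (inf_le_left.trans le_sup_right))
    _ = a ⊓ b := by
      rw [sup_inf_assoc_of_le_of_normal le_sup_left, sup_comm b a, hsup.symm.eq_bot, sup_bot_eq]
    _ ≤ ⊥ := h.le_bot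

theorem sSupIndep_insert_of_normal {s : Set (Subgroup G)} {b : Subgroup G} (hs : sSupIndep s)
    (hn : ∀ a ∈ s, a.Normal) (hb : Disjoint b (sSup s)) : sSupIndep (insert b s) := by
  intro a ha
  by_cases hab : a = b
  · subst hab
    exact hb.mono_right (sSup_le_sSup (Set.sdiff_singleton_subset_iff.mpr le_rfl))
  have has : a ∈ s := ha.resolve_left hab
  have : (sSup (s \ {a})).Normal := by
    have : ∀ c : ↥(s \ {a}), (c : Subgroup G).Normal := fun c => hn c c.2.1
    rw [sSup_eq_iSup']
    infer_instance
  rw [Set.insert_sdiff_of_notMem _ (Set.notMem_singleton_iff.mpr (Ne.symm hab)), sSup_insert,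
    sup_comm]
  exact disjoint_sup_right_of_disjoint_sup_left (hs has)
    (hb.symm.mono_left (sup_le (le_sSup has) (sSup_le_sSup Set.sdiff_subset)))

theorem normal_inf_of_sup_eq_top {B K L : Subgroup G} [L.Normal] (hBK : B ⊔ K = ⊤)
    (hBL : B ≤ centralizer L) : (L ⊓ K).Normal := by
  rw [← normalizer_eq_top_iff, eq_top_iff, ← hBK]
  refine sup_le ((hBL.trans (centralizer_le inf_le_left)).trans (centralizer_le_normalizer _)) ?_
  calc K ≤ normalizer (L : Set G) ⊓ normalizer (K : Set G) := by
        rw [normalizer_eq_top_iff.mpr ‹_›, top_inf_eq]; exact le_normalizer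
    _ ≤ _ := inf_normalizer_le_normalizer_inf

theorem isNilpotent_sup_of_isMulCommutative (H K : Subgroup G) [H.Normal] [K.Normal]
    [IsMulCommutative H] [IsMulCommutative K] : Group.IsNilpotent ↥(H ⊔ K) := by
  -- `⁅P, P⁆ ≤ H ⊓ K`, which is central in `P`
  set P := H ⊔ K
  set Z := H.subgroupOf P ⊓ K.subgroupOf P
  have hsup : H.subgroupOf P ⊔ K.subgroupOf P = ⊤ := by
    rw [← subgroupOf_sup le_sup_left le_sup_right, subgroupOf_self]
  have hcomm : _root_.commutator P ≤ Z :=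
    le_inf (Normal.commutator_le_of_self_sup_commutative_eq_top hsup inferInstance)
      (Normal.commutator_le_of_self_sup_commutative_eq_top (by rwa [sup_comm]) inferInstance)
  have : IsMulCommutative (P ⧸ Z) := Normal.quotient_commutative_iff_commutator_le.mpr hcomm
  have : Group.IsNilpotent (P ⧸ Z) := ⟨1, upperCentralSeries_one_eq_top_iff.mpr this⟩
  refine isNilpotent_of_ker_le_center (QuotientGroup.mk' Z) ?_
  have hcent : P ≤ centralizer (H ⊓ K : Subgroup G) :=
    sup_le ((le_centralizer_iff_isMulCommutative.mpr ‹_›).trans (centralizer_le inf_le_left))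
      ((le_centralizer_iff_isMulCommutative.mpr ‹_›).trans (centralizer_le inf_le_right))
  rw [QuotientGroup.ker_mk']
  exact fun z hz => mem_center_iff.mpr fun g => Subtype.ext (hcent g.2 z ⟨hz.1, hz.2⟩).symm

end Subgroup

theorem exists_isMinimalNormal_le {G : Type} [Group G] [Finite G] {N : Subgroup G} [N.Normal]
    (hN : N ≠ ⊥) : ∃ A, IsMinimalNormal G A ∧ A ≤ N := by
  obtain ⟨A, hAN, hA⟩ :=
    (Set.toFinite {B : Subgroup G | B.Normal ∧ B ≠ ⊥}).exists_le_minimal ⟨‹_›, hN⟩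
  refine ⟨A, ⟨hA.prop.1, hA.prop.2, fun B hB hBA => ?_⟩, hAN⟩
  exact or_iff_not_imp_left.mpr fun hB' => le_antisymm hBA (hA.2 ⟨hB, hB'⟩ hBA)

open Subgroup

section Frattini

variable {G : Type*} [Group G]

theorem le_frattini_of_normal_of_nongenerating {K H : Subgroup G} [K.Normal] (hKH : K ≤ H)
    (hK : ∀ L ≤ H, K ⊔ L = H → L = H) : K ≤ frattini G := by
  refine le_iInf₂ fun M hM => ?_
  by_contra hKM
  have hKM_top : K ⊔ M = ⊤ := hM.2 _ (right_lt_sup.mpr hKM)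
  have hHM : M ⊓ H = H := hK _ inf_le_right <| by
    rw [← sup_inf_assoc_of_le_of_normal hKH, hKM_top, top_inf_eq]
  exact hKM (hKH.trans (inf_eq_right.mp hHM))

theorem map_subtype_frattini_le [Finite G] (N : Subgroup G) [N.Normal] :
    (frattini N).map N.subtype ≤ frattini G := by
  refine le_frattini_of_normal_of_nongenerating (map_subtype_le _) fun L hLN hL => ?_
  have : L.subgroupOf N = ⊤ := frattini_nongenerating <| map_injective N.subtype_injective <| by
    rw [Subgroup.map_sup, subgroupOf_map_subtype, inf_of_le_left hLN, sup_comm, hL,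
      ← MonoidHom.range_eq_map, range_subtype]
  rw [← inf_of_le_left hLN, ← subgroupOf_map_subtype, this, ← MonoidHom.range_eq_map,
    range_subtype]

theorem commutator_le_of_isCoatom {M : Subgroup G} [M.Normal] (hM : IsCoatom M) :
    commutator G ≤ M := by
  obtain ⟨x, -, hx⟩ := SetLike.exists_of_lt hM.lt_top
  exact Normal.commutator_le_of_self_sup_commutative_eq_top
    (hM.2 _ (left_lt_sup.mpr (zpowers_le.not.mpr hx))) (zpowers_isMulCommutative x)

theorem commutator_le_frattini [Group.IsNilpotent G] : commutator G ≤ frattini G :=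
  le_iInf₂ fun M hM =>
    have := NormalizerCondition.normal_of_coatom M Group.normalizerCondition_of_isNilpotent hM
    commutator_le_of_isCoatom hM

theorem isMulCommutative_of_frattini_eq_bot [Finite G] (hG : frattini G = ⊥) (H : Subgroup G)
    [H.Normal] [Group.IsNilpotent H] : IsMulCommutative H := by
  rw [← commutator_self_eq_bot_iff, ← le_bot_iff, ← hG, ← map_subtype_commutator]
  exact (map_mono commutator_le_frattini).trans (map_subtype_frattini_le H)

end Frattini

section Fitting

variable (G : Type) [Group G]

theorem fittingSubgroup_characteristic : (fittingSubgroup G).Characteristic := by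
  refine characteristic_iff_map_le.mpr fun φ => map_le_iff_le_comap.mpr <| iSup₂_le ?_
  rintro H ⟨hH, hHnil⟩
  have : Group.IsNilpotent (H.map φ.toMonoidHom) :=
    Group.nilpotent_of_mulEquiv (H.equivMapOfInjective _ φ.injective)
  exact map_le_iff_le_comap.mp (le_iSup₂_of_le _ ⟨hH.map _ φ.surjective, this⟩ le_rfl)

theorem isMulCommutative_fittingSubgroup_of_frattini_eq_bot [Finite G] (hG : frattini G = ⊥) :
    IsMulCommutative (fittingSubgroup G) := by
  have hclosed : SupClosed {H : Subgroup G | H.Normal ∧ Group.IsNilpotent H} := by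
    rintro H ⟨hH, hHnil⟩ K ⟨hK, hKnil⟩
    have := isMulCommutative_of_frattini_eq_bot hG H
    have := isMulCommutative_of_frattini_eq_bot hG K
    exact ⟨inferInstance, isNilpotent_sup_of_isMulCommutative H K⟩
  obtain ⟨_, _⟩ : (fittingSubgroup G).Normal ∧ Group.IsNilpotent (fittingSubgroup G) :=
    hclosed.biSup_mem (Set.toFinite _) ⟨inferInstance, inferInstance⟩ fun _ => id
  exact isMulCommutative_of_frattini_eq_bot hG _

end Fitting

section Complements

variable {G : Type*} [Group G]

theorem exists_isCompl_of_disjoint_frattini [Finite G] {A : Subgroup G} [A.Normal]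
    [IsMulCommutative A] (hA : Disjoint A (frattini G)) : ∃ K, IsCompl A K := by
  obtain ⟨K, -, hK⟩ :=
    (Set.toFinite {K : Subgroup G | A ⊔ K = ⊤}).exists_le_minimal (a := ⊤) (sup_top_eq A)
  have hAK : A ⊔ K = ⊤ := hK.prop
  have : (A ⊓ K).Normal :=
    normal_inf_of_sup_eq_top hAK (le_centralizer_iff_isMulCommutative.mpr ‹_›)
  have hfrattini : A ⊓ K ≤ frattini G := by
    refine le_frattini_of_normal_of_nongenerating inf_le_right fun L hLK hL => ?_
    refine le_antisymm hLK (hK.2 ?_ hLK)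
    show A ⊔ L = ⊤
    rw [← hAK, ← hL, ← sup_assoc, sup_inf_self]
  exact ⟨K, IsCompl.of_eq (le_bot_iff.mp (hA inf_le_left hfrattini)) hAK⟩

end Complements

theorem exists_sSupIndep_isMinimalNormal_of_disjoint_frattini {G : Type} [Group G] [Finite G]
    (A : Subgroup G) [hAn : A.Normal] [hAc : IsMulCommutative A] (hA : Disjoint A (frattini G)) :
    ∃ S : Finset (Subgroup G), (∀ B ∈ S, IsMinimalNormal G B ∧ B ≤ A) ∧
      sSupIndep (↑S : Set (Subgroup G)) ∧ (⨆ B ∈ S, B) = A := by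
  classical
  revert hAn hAc hA
  induction A using WellFoundedLT.induction with
  | ind A ih =>
    intro _ _ hA
    rcases eq_or_ne A ⊥ with rfl | hA0
    · exact ⟨∅, by simp, by simp, by simp⟩
    obtain ⟨B, hB, hBA⟩ := exists_isMinimalNormal_le hA0
    have := hB.1
    have := isMulCommutative_of_le hBA
    obtain ⟨K, hK⟩ := exists_isCompl_of_disjoint_frattini (hA.mono_left hBA)
    have : (A ⊓ K).Normal := normal_inf_of_sup_eq_top hK.sup_eq_top
      (hBA.trans (le_centralizer_iff_isMulCommutative.mpr ‹_›))
    have := isMulCommutative_of_le (inf_le_left : A ⊓ K ≤ A)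
    have hlt : A ⊓ K < A := by
      refine inf_le_left.lt_of_ne fun hAK => hB.2.1 ?_
      exact le_bot_iff.mp (hK.disjoint le_rfl (hBA.trans (inf_eq_left.mp hAK)))
    obtain ⟨S, hSmin, hSind, hSsup⟩ := ih _ hlt (hA.mono_left inf_le_left)
    refine ⟨insert B S, ?_, ?_, ?_⟩
    · intro C hC
      rcases Finset.mem_insert.mp hC with rfl | hC
      · exact ⟨hB, hBA⟩
      · exact ⟨(hSmin C hC).1, (hSmin C hC).2.trans inf_le_left⟩
    · rw [Finset.coe_insert]
      refine sSupIndep_insert_of_normal hSind (fun C hC => (hSmin C hC).1.1) ?_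
      rw [sSup_eq_iSup]
      exact hSsup ▸ hK.disjoint.mono_right inf_le_right
    · rw [Finset.iSup_insert, hSsup, inf_comm, ← sup_inf_assoc_of_le_of_normal hBA,
        hK.sup_eq_top, top_inf_eq]

theorem fitting_eq_product_of_minimal_normals_general (G : Type) [Group G] [Finite G]
    (N : Subgroup G) [N.Normal]
    (h : ∀ A : Subgroup G, IsMinimalNormal G A → A ≤ N → ¬ A ≤ frattini G) :
    ∃ S : Finset (Subgroup G),
      (∀ A ∈ S, IsMinimalNormal G A ∧ A ≤ N) ∧
      sSupIndep (↑S : Set (Subgroup G)) ∧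
      (⨆ A ∈ S, A) = (fittingSubgroup ↥N).map N.subtype := by
  have hN : Disjoint N (frattini G) := by
    by_contra hne
    rw [disjoint_iff] at hne
    obtain ⟨A, hA, hAle⟩ := exists_isMinimalNormal_le hne
    exact h A hA (hAle.trans inf_le_left) (hAle.trans inf_le_right)
  have hNfrattini : frattini N = ⊥ := map_injective N.subtype_injective <| by
    rw [Subgroup.map_bot, ← le_bot_iff]
    exact hN (map_subtype_le _) (map_subtype_frattini_le N)
  have := isMulCommutative_fittingSubgroup_of_frattini_eq_bot N hNfrattini
  have := fittingSubgroup_characteristic N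
  obtain ⟨S, hSmin, hSind, hSsup⟩ := exists_sSupIndep_isMinimalNormal_of_disjoint_frattini
    ((fittingSubgroup N).map N.subtype) (hN.mono_left (map_subtype_le _))
  exact ⟨S, fun A hA => ⟨(hSmin A hA).1, (hSmin A hA).2.trans (map_subtype_le _)⟩, hSind, hSsup⟩

/-- Let `N` be a nontrivial soluble normal subgroup of the finite group `G`. If every
minimal normal subgroup of `G` contained in `N` is not contained in `Φ(G)`, then the
Fitting subgroup `F(N)` is the (internal) direct product of some minimal normal
subgroups of `G` contained in `N`. -/
theorem fitting_eq_product_of_minimal_normals (G : Type) [Group G] [Finite G]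
    (N : Subgroup G) [N.Normal] (hN : N ≠ ⊥) (hsol : IsSolvable ↥N)
    (h : ∀ A : Subgroup G, IsMinimalNormal G A → A ≤ N → ¬ A ≤ frattini G) :
    ∃ S : Finset (Subgroup G),
      (∀ A ∈ S, IsMinimalNormal G A ∧ A ≤ N) ∧
      sSupIndep (↑S : Set (Subgroup G)) ∧
      (⨆ A ∈ S, A) = (fittingSubgroup ↥N).map N.subtype :=
  fitting_eq_product_of_minimal_normals_general G N h
end

section
/- Let H be a p-subgroup of a finite group G. If G is p-nilpotent, then H satisfies the partial Π-property in G. -/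
/-- A subgroup `H` of a finite group `G` satisfies the partial `Π`-property in `G` if
there is a chief series `1 = c 0 < c 1 < ... < c n = G` such that for every chief factor
`c (i+1) / c i`, the index `|G/c i : N_{G/c i}((H ⊔ c i) ⊓ c (i+1) / c i)|`
(which equals `|G : N_G((H ⊔ c i) ⊓ c (i+1))|`) is a `π`-number for
`π = π((H ⊔ c i) ⊓ c (i+1) / c i)`, i.e. all its prime divisors divide the order
`|(H ⊔ c i) ⊓ c (i+1)| / |c i|` of that intersection. -/
def PartialPiProperty (G : Type) [Group G] (H : Subgroup G) : Prop :=
  ∃ (n : ℕ) (c : ℕ → Subgroup G),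
    c 0 = ⊥ ∧ c n = ⊤ ∧
    (∀ i, i ≤ n → (c i).Normal) ∧
    (∀ i, i < n → c i < c (i + 1)) ∧
    (∀ i, i < n → ∀ X : Subgroup G, X.Normal → c i ≤ X → X ≤ c (i + 1) →
      X = c i ∨ X = c (i + 1)) ∧
    (∀ i, i < n → ∀ q : ℕ, q.Prime →
      q ∣ (Subgroup.normalizer (((H ⊔ c i) ⊓ c (i + 1) : Subgroup G) : Set G)).index →
      q ∣ Nat.card ((H ⊔ c i) ⊓ c (i + 1) : Subgroup G) / Nat.card (c i))
/-- A group `G` is `p`-nilpotent if it has a normal `p`-complement: a normal subgroup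
of order prime to `p` whose index is a power of `p`. -/
def IsPNilpotent (p : ℕ) (G : Type) [Group G] : Prop :=
  ∃ K : Subgroup G, K.Normal ∧ ¬ p ∣ Nat.card K ∧ ∃ m : ℕ, K.index = p ^ m

/-!
Let `K` be the normal `p`-complement and refine `1 ⊴ K ⊴ G` to a chief series. For a chief
factor `B/A` below `K`, the index `|(HA ∩ B) : A|` divides both `|H|` and `|B|`, which are
coprime, so `HA ∩ B = A` is normal and its normalizer has index `1`. For a factor above `K`, the
normalizer of `HA ∩ B` contains `HA ⊇ K`, so its index is a power of `p`; and unless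
`HA ∩ B = A`, the `p`-power `|(HA ∩ B) : A|` is divisible by `p`.
-/

open Subgroup

section

variable {G : Type*} [Group G]

theorem IsPGroup.card_coprime_of_not_dvd {p : ℕ} [hp : Fact p.Prime] [Finite G]
    (hG : IsPGroup p G) {n : ℕ} (hn : ¬ p ∣ n) : (Nat.card G).Coprime n := by
  obtain ⟨k, hk⟩ := hG.exists_card_eq
  exact hk ▸ ((hp.out.coprime_iff_not_dvd).mpr hn).pow_left k

instance : BoundedOrder {N : Subgroup G // N.Normal} :=
  Subtype.boundedOrder normal_bot normal_top

/-- Series of normal subgroups in which each term is covered by the next in the lattice of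
normal subgroups; those running from `⊥` to `⊤` are the chief series of `G`. -/
abbrev ChiefSeries (G : Type*) [Group G] :=
  RelSeries {(A, B) : {N : Subgroup G // N.Normal} × {N : Subgroup G // N.Normal} | A ⋖ B}

namespace ChiefSeries

theorem monotone (t : ChiefSeries G) : Monotone t :=
  Fin.monotone_iff_le_succ.mpr fun i => (t.step i).le

theorem le_or_le_of_mem (t : ChiefSeries G) {K : {N : Subgroup G // N.Normal}} (hK : K ∈ t)
    (i : Fin t.length) : t i.succ ≤ K ∨ K ≤ t i.castSucc := by
  obtain ⟨k, rfl⟩ := hK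
  rcases le_or_gt i.succ k with hik | hki
  · exact .inl (t.monotone hik)
  · exact .inr (t.monotone (Fin.le_castSucc_iff.mpr hki))

theorem exists_mem [Finite G] (K : {N : Subgroup G // N.Normal}) :
    ∃ t : ChiefSeries G, t.head = ⊥ ∧ t.last = ⊤ ∧ K ∈ t := by
  obtain ⟨t, i, hti, ht0, htn⟩ :=
    LTSeries.exists_relSeries_covBy_and_head_eq_bot_and_last_eq_bot (RelSeries.singleton _ K)
  exact ⟨t, ht0, htn, i 0, congr_fun hti 0⟩

end ChiefSeries

theorem card_div_card_eq_relIndex {A X : Subgroup G} [Finite A] (h : A ≤ X) :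
    Nat.card X / Nat.card A = A.relIndex X := by
  rw [← relIndex_bot_left X, ← relIndex_mul_relIndex _ _ _ bot_le h, relIndex_bot_left,
    Nat.mul_div_cancel_left _ Nat.card_pos]

theorem relIndex_inf_sup_dvd_card (H A B : Subgroup G) [A.Normal] (hAB : A ≤ B) :
    A.relIndex ((H ⊔ A) ⊓ B) ∣ Nat.card H := by
  have hle : A.relIndex ((H ⊔ A) ⊓ B) ∣ A.relIndex (H ⊔ A) :=
    Dvd.intro _ (relIndex_mul_relIndex _ _ _ (le_inf le_sup_right hAB) inf_le_left)
  rw [relIndex_sup_right] at hle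
  exact hle.trans (relIndex_dvd_card _ _)

theorem inf_sup_eq_of_coprime {H A B : Subgroup G} [A.Normal] (hAB : A ≤ B)
    (hcop : (Nat.card H).Coprime (Nat.card B)) : (H ⊔ A) ⊓ B = A := by
  have hB : A.relIndex ((H ⊔ A) ⊓ B) ∣ Nat.card B :=
    (relIndex_dvd_card _ _).trans (card_dvd_of_le inf_le_right)
  have hone := Nat.eq_one_of_dvd_coprimes hcop (relIndex_inf_sup_dvd_card H A B hAB) hB
  exact le_antisymm (relIndex_eq_one.mp hone) (le_inf le_sup_right hAB)

def PiIndexCondition (H A B : Subgroup G) : Prop :=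
  ∀ q : ℕ, q.Prime → q ∣ (normalizer (((H ⊔ A) ⊓ B : Subgroup G) : Set G)).index →
    q ∣ Nat.card ((H ⊔ A) ⊓ B : Subgroup G) / Nat.card A

theorem piIndexCondition_of_normal {H A B : Subgroup G} (h : ((H ⊔ A) ⊓ B).Normal) :
    PiIndexCondition H A B := by
  intro q hq hdvd
  rw [normalizer_eq_top, index_top, Nat.dvd_one] at hdvd
  exact absurd hdvd hq.ne_one

theorem piIndexCondition_of_coprime {H A B : Subgroup G} (hA : A.Normal) (hAB : A ≤ B)
    (hcop : (Nat.card H).Coprime (Nat.card B)) : PiIndexCondition H A B :=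
  piIndexCondition_of_normal (by rwa [inf_sup_eq_of_coprime hAB hcop])

theorem piIndexCondition_of_index_dvd_pow [Finite G] {p : ℕ} [hp : Fact p.Prime]
    {H A B : Subgroup G} (hH : IsPGroup p H) (hA : A.Normal) (hB : B.Normal) (hAB : A ≤ B)
    {m : ℕ} (hAm : A.index ∣ p ^ m) : PiIndexCondition H A B := by
  intro q hq hdvd
  by_cases hXA : (H ⊔ A) ⊓ B = A
  · exact piIndexCondition_of_normal (by rwa [hXA]) q hq hdvd
  have hN : H ⊔ A ≤ normalizer (((H ⊔ A) ⊓ B : Subgroup G) : Set G) :=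
    (le_inf le_normalizer le_normalizer_of_normal).trans inf_normalizer_le_normalizer_inf
  have hqp : q = p := (Nat.prime_dvd_prime_iff_eq hq hp.out).mp <| hq.dvd_of_dvd_pow <|
    hdvd.trans <| (index_dvd_of_le (le_sup_right.trans hN)).trans hAm
  obtain ⟨n, hn⟩ := hH.exists_card_eq
  obtain ⟨a, -, ha⟩ := (Nat.dvd_prime_pow hp.out).mp (hn ▸ relIndex_inf_sup_dvd_card H A B hAB)
  have ha0 : a ≠ 0 := by
    rintro rfl
    exact hXA (le_antisymm (relIndex_eq_one.mp ha) (le_inf le_sup_right hAB))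
  rw [card_div_card_eq_relIndex (le_inf le_sup_right hAB), ha, hqp]
  exact dvd_pow_self p ha0

end

theorem partialPiProperty_of_chiefSeries {G : Type} [Group G] (H : Subgroup G)
    (t : ChiefSeries G) (ht0 : t.head = ⊥) (htn : t.last = ⊤)
    (ht : ∀ i : Fin t.length, PiIndexCondition H (t i.castSucc) (t i.succ)) :
    PartialPiProperty G H := by
  let c : ℕ → Subgroup G := fun i => if hi : i < t.length + 1 then t ⟨i, hi⟩ else ⊤
  have hc (i : Fin (t.length + 1)) : c i = t i := dif_pos i.2
  have hc_step (i : Fin t.length) : c i = t i.castSucc ∧ c (i + 1) = t i.succ :=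
    ⟨hc i.castSucc, hc i.succ⟩
  refine ⟨t.length, c, ?_, ?_, fun i hi => ?_, fun i hi => ?_, fun i hi X hX => ?_,
    fun i hi => ?_⟩
  · exact (hc 0).trans (congrArg Subtype.val ht0)
  · exact (hc (Fin.last _)).trans (congrArg Subtype.val htn)
  · simpa only [hc ⟨i, Nat.lt_succ_of_le hi⟩] using (t ⟨i, _⟩).2
  · obtain ⟨h0, h1⟩ := hc_step ⟨i, hi⟩
    rw [h0, h1]
    exact (t.step ⟨i, hi⟩).lt
  · obtain ⟨h0, h1⟩ := hc_step ⟨i, hi⟩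
    rw [h0, h1]
    intro hAX hXB
    simpa [Subtype.ext_iff] using (t.step ⟨i, hi⟩).eq_or_eq (c := ⟨X, hX⟩) hAX hXB
  · obtain ⟨h0, h1⟩ := hc_step ⟨i, hi⟩
    rw [h0, h1]
    exact ht ⟨i, hi⟩

/-- If `H` is a `p`-subgroup of a finite `p`-nilpotent group `G`, then `H` satisfies
the partial `Π`-property in `G`. -/
theorem partialPi_of_pNilpotent (G : Type) [Group G] [Finite G] (p : ℕ) [Fact p.Prime]
    (H : Subgroup G) (hH : IsPGroup p H) (hG : IsPNilpotent p G) :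
    PartialPiProperty G H := by
  obtain ⟨K, hK, hKp, m, hKm⟩ := hG
  obtain ⟨t, ht0, htn, hKt⟩ := ChiefSeries.exists_mem ⟨K, hK⟩
  refine partialPiProperty_of_chiefSeries H t ht0 htn fun i => ?_
  have hAB : (t i.castSucc : Subgroup G) ≤ t i.succ := (t.step i).le
  rcases t.le_or_le_of_mem hKt i with hBK | hKA
  · exact piIndexCondition_of_coprime (t i.castSucc).2 hAB
      (hH.card_coprime_of_not_dvd fun hpB => hKp (hpB.trans (card_dvd_of_le hBK)))
  · exact piIndexCondition_of_index_dvd_pow hH (t i.castSucc).2 (t i.succ).2 hAB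
      (hKm ▸ index_dvd_of_le hKA)
end

section
/- Let H be a normal subgroup of a finite group G, P a Sylow p-subgroup of H, and K a normal p'-subgroup of G. If every maximal subgroup of P satisfies the partial Π-property in N_G(P), then every maximal subgroup of PK/K satisfies the partial Π-property in N_{G/K}(PK/K). -/
open Subgroup

namespace Relation

variable {α : Type*} {r : α → α → Prop}

theorem reflTransGen_of_forall_lt {c : ℕ → α} {n : ℕ} (h : ∀ i < n, r (c i) (c (i + 1))) :
    ReflTransGen r (c 0) (c n) := by
  induction n with
  | zero => exact .refl
  | succ n ih => exact (ih fun i hi ↦ h i (by omega)).tail (h n n.lt_succ_self)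

theorem ReflTransGen.exists_seq {a b : α} (h : ReflTransGen r a b) :
    ∃ (n : ℕ) (c : ℕ → α), c 0 = a ∧ c n = b ∧ ∀ i < n, r (c i) (c (i + 1)) := by
  induction h with
  | refl => exact ⟨0, fun _ ↦ a, rfl, rfl, fun _ h ↦ absurd h (Nat.not_lt_zero _)⟩
  | @tail b d _ hbd ih =>
    obtain ⟨n, c, h0, hn, hc⟩ := ih
    refine ⟨n + 1, fun i ↦ if i ≤ n then c i else d, by simpa using h0, by simp, fun i hi ↦ ?_⟩
    rcases Nat.lt_or_ge i n with hin | hin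
    · simpa [hin.le, Nat.succ_le_of_lt hin] using hc i hin
    · obtain rfl : i = n := by omega
      simpa [hn] using hbd

end Relation

namespace Subgroup

variable {G G' : Type*} [Group G] [Group G']

theorem card_eq_card_map_mul_card_ker_inf (f : G →* G') (W : Subgroup G) :
    Nat.card W = Nat.card (W.map f) * Nat.card (f.ker ⊓ W : Subgroup G) := by
  have h := relIndex_mul_relIndex (⊥ : Subgroup G) (f.ker ⊓ W) W bot_le inf_le_right
  rw [relIndex_bot_left, relIndex_bot_left, inf_relIndex_right, relIndex_ker] at h
  rw [← h, mul_comm]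

theorem relIndex_sup_dvd_card [Finite G] (H K : Subgroup G) [K.Normal] :
    H.relIndex (H ⊔ K) ∣ Nat.card K := by
  have hH := relIndex_mul_relIndex ⊥ H (H ⊔ K) bot_le le_sup_left
  have hK := relIndex_mul_relIndex ⊥ K (H ⊔ K) bot_le le_sup_right
  rw [relIndex_sup_right, relIndex_bot_left, relIndex_bot_left] at hK
  rw [relIndex_bot_left, relIndex_bot_left, ← hK] at hH
  refine Nat.dvd_of_mul_dvd_mul_left (Nat.card_pos (α := H)) ?_
  rw [hH, mul_comm (Nat.card H)]
  exact mul_dvd_mul_left _ (relIndex_dvd_card K H)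

theorem index_normalizer_map_dvd {φ : G →* G'} (hφ : Function.Surjective φ) (D : Subgroup G) :
    (normalizer (D.map φ : Set G')).index ∣ (normalizer (D : Set G)).index :=
  (index_dvd_of_le (le_normalizer_map φ)).trans (index_map_dvd _ hφ)

theorem eq_map_or_eq_map_of_chief {φ : G →* G'} {c c' : Subgroup G} [c'.Normal] (hcc' : c ≤ c')
    (hchief : ∀ X : Subgroup G, X.Normal → c ≤ X → X ≤ c' → X = c ∨ X = c')
    {X : Subgroup G'} (hX : X.Normal) (hcX : c.map φ ≤ X) (hXc' : X ≤ c'.map φ) :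
    X = c.map φ ∨ X = c'.map φ := by
  have hX_eq : X = (X.comap φ ⊓ c').map φ := by
    refine le_antisymm (fun x hx ↦ ?_) ((map_mono inf_le_left).trans (map_comap_le _ _))
    obtain ⟨v, hv, rfl⟩ := hXc' hx
    exact ⟨v, ⟨hx, hv⟩, rfl⟩
  have := hX.comap φ
  rcases hchief _ inferInstance (le_inf (map_le_iff_le_comap.mp hcX) hcc') inf_le_right
    with h | h <;> rw [h] at hX_eq <;> simp [hX_eq]

end Subgroup

namespace IsPGroup

variable {G G' : Type*} [Group G] [Group G'] [Finite G] {p : ℕ} [Fact p.Prime]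

theorem disjoint_of_not_dvd_card {A K : Subgroup G} (hA : IsPGroup p A)
    (hK : ¬ p ∣ Nat.card K) : Disjoint A K := by
  obtain ⟨k, hk⟩ := IsPGroup.iff_card.mp hA
  exact disjoint_of_coprime_natCard
    (hk ▸ Nat.Coprime.pow_left k ((Nat.Prime.coprime_iff_not_dvd Fact.out).mpr hK))

theorem sup_inf_sup_eq {A N K : Subgroup G} [N.Normal] (hA : IsPGroup p A)
    (hK : ¬ p ∣ Nat.card K) : (A ⊔ N) ⊓ (N ⊔ K) = N := by
  refine le_antisymm ?_ (le_inf le_sup_right le_sup_left)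
  rw [← QuotientGroup.ker_mk' N, ← Subgroup.map_eq_bot_iff, eq_bot_iff]
  refine (map_inf_le _ _ _).trans ?_
  rw [Subgroup.map_sup, Subgroup.map_sup, QuotientGroup.ker_mk', QuotientGroup.map_mk'_self,
    sup_bot_eq, bot_sup_eq]
  exact ((hA.map _).disjoint_of_not_dvd_card fun h ↦ hK (h.trans (K.card_map_dvd _))).le_bot

variable {φ : G →* G'} {A c c' : Subgroup G}

theorem map_sup_inf_eq (hA : IsPGroup p A) (hker : ¬ p ∣ Nat.card φ.ker) [c'.Normal]
    (hcc' : c ≤ c') : ((A ⊔ c) ⊓ c').map φ = (A ⊔ c).map φ ⊓ c'.map φ := by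
  refine le_antisymm (map_inf_le _ _ _) ?_
  rintro _ ⟨⟨u, hu, rfl⟩, v, hv, hvu⟩
  have hu_ker : u ∈ c' ⊔ φ.ker := by
    rw [← mul_inv_cancel_left v u]
    refine mul_mem_sup hv ?_
    rw [φ.mem_ker, map_mul, map_inv, hvu, inv_mul_cancel]
  have hu' : u ∈ c' := hA.sup_inf_sup_eq (N := c') hker ▸ ⟨sup_le_sup_left hcc' A hu, hu_ker⟩
  exact ⟨u, ⟨hu, hu'⟩, rfl⟩

theorem card_map_sup_inf_div_card_map (hA : IsPGroup p A) (hker : ¬ p ∣ Nat.card φ.ker)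
    [c.Normal] (hcc' : c ≤ c') :
    Nat.card (((A ⊔ c) ⊓ c').map φ) / Nat.card (c.map φ) =
      Nat.card ((A ⊔ c) ⊓ c' : Subgroup G) / Nat.card c := by
  have hker_inf : φ.ker ⊓ ((A ⊔ c) ⊓ c') = φ.ker ⊓ c := by
    refine le_antisymm (fun x hx ↦ ⟨hx.1, ?_⟩) (inf_le_inf_left _ (le_inf le_sup_right hcc'))
    exact hA.sup_inf_sup_eq (N := c) hker ▸ ⟨hx.2.1, mem_sup_right hx.1⟩
  rw [card_eq_card_map_mul_card_ker_inf φ ((A ⊔ c) ⊓ c'), card_eq_card_map_mul_card_ker_inf φ c,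
    hker_inf, Nat.mul_div_mul_right _ _ Nat.card_pos]

/-- Frattini argument in `N_G(Y)`, in which `Y` is normal with Sylow `p`-subgroup `P`. -/
theorem normalizer_le_normalizer_sup {P Y : Subgroup G} (hP : IsPGroup p P)
    (hPY : P ≤ Y) (hindex : ¬ p ∣ P.relIndex Y) :
    normalizer (Y : Set G) ≤ normalizer (P : Set G) ⊔ Y := by
  set X := normalizer (Y : Set G)
  have hPX : P ≤ X := hPY.trans le_normalizer
  have hS : IsPGroup p ((P.subgroupOf X).subgroupOf (Y.subgroupOf X)) :=
    hP.comap_subtype.comap_subtype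
  have hS_index : ¬ p ∣ ((P.subgroupOf X).subgroupOf (Y.subgroupOf X)).index := by
    rwa [← relIndex, relIndex_subgroupOf le_normalizer]
  have hS_map : ((P.subgroupOf X).subgroupOf (Y.subgroupOf X)).map (Y.subgroupOf X).subtype =
      P.subgroupOf X := by
    rw [subgroupOf_map_subtype, inf_of_le_left (subgroupOf_mono X hPY)]
  have hfrattini := Sylow.normalizer_sup_eq_top (hS.toSylow hS_index)
  rw [IsPGroup.toSylow_coe, hS_map, ← subgroupOf_normalizer_eq hPX] at hfrattini
  have := congrArg (Subgroup.map X.subtype) hfrattini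
  rw [Subgroup.map_sup, subgroupOf_map_subtype, subgroupOf_map_subtype, ← MonoidHom.range_eq_map,
    range_subtype] at this
  exact this.symm.le.trans (sup_le_sup inf_le_left inf_le_left)

theorem map_mk'_normalizer {P K : Subgroup G} [K.Normal] (hP : IsPGroup p P)
    (hK : ¬ p ∣ Nat.card K) :
    (normalizer (P : Set G)).map (QuotientGroup.mk' K) =
      normalizer (P.map (QuotientGroup.mk' K) : Set (G ⧸ K)) := by
  set π := QuotientGroup.mk' K
  have hπ : Function.Surjective π := QuotientGroup.mk'_surjective K
  refine le_antisymm (le_normalizer_map π) ?_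
  have hfrattini := hP.normalizer_le_normalizer_sup le_sup_left
    fun h ↦ hK (h.trans (relIndex_sup_dvd_card P K))
  rw [← map_comap_eq_self_of_surjective hπ (normalizer _), comap_normalizer_eq_of_surjective _ hπ,
    comap_map_eq, QuotientGroup.ker_mk']
  refine (map_mono hfrattini).trans ?_
  rw [Subgroup.map_sup, Subgroup.map_sup, QuotientGroup.map_mk'_self, sup_bot_eq]
  exact sup_le le_rfl (map_mono le_normalizer)

end IsPGroup

/-- The condition imposed on a chief factor `c' / c` by `PartialPiProperty`. -/
structure IsPartialPiStep {G : Type*} [Group G] (B c c' : Subgroup G) : Prop where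
  normal_left : c.Normal
  normal_right : c'.Normal
  lt : c < c'
  chief : ∀ X : Subgroup G, X.Normal → c ≤ X → X ≤ c' → X = c ∨ X = c'
  prime_dvd : ∀ q : ℕ, q.Prime →
    q ∣ (normalizer (((B ⊔ c) ⊓ c' : Subgroup G) : Set G)).index →
      q ∣ Nat.card ((B ⊔ c) ⊓ c' : Subgroup G) / Nat.card c

theorem IsPartialPiStep.map {G G' : Type*} [Group G] [Group G'] [Finite G] {p : ℕ}
    [Fact p.Prime] {φ : G →* G'} (hφ : Function.Surjective φ) (hker : ¬ p ∣ Nat.card φ.ker)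
    {A c c' : Subgroup G} (hA : IsPGroup p A) (h : IsPartialPiStep A c c') :
    c.map φ = c'.map φ ∨ IsPartialPiStep (A.map φ) (c.map φ) (c'.map φ) := by
  have hc := h.normal_left
  have hc' := h.normal_right
  refine or_iff_not_imp_left.mpr fun hne ↦
    ⟨hc.map φ hφ, hc'.map φ hφ, lt_of_le_of_ne (map_mono h.lt.le) hne,
      fun X hX ↦ eq_map_or_eq_map_of_chief h.lt.le h.chief hX, fun q hq hdvd ↦ ?_⟩
  rw [← Subgroup.map_sup, ← hA.map_sup_inf_eq hker h.lt.le] at hdvd ⊢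
  rw [hA.card_map_sup_inf_div_card_map hker h.lt.le]
  exact h.prime_dvd q hq (hdvd.trans (index_normalizer_map_dvd hφ _))

theorem partialPiProperty_iff_reflTransGen {G : Type} [Group G] (B : Subgroup G) :
    PartialPiProperty G B ↔ Relation.ReflTransGen (IsPartialPiStep B) ⊥ ⊤ := by
  constructor
  · rintro ⟨n, c, h0, hn, hnormal, hlt, hchief, hprime⟩
    rw [← h0, ← hn]
    exact Relation.reflTransGen_of_forall_lt fun i hi ↦
      ⟨hnormal i hi.le, hnormal (i + 1) hi, hlt i hi, hchief i hi, hprime i hi⟩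
  · intro h
    obtain ⟨n, c, h0, hn, hstep⟩ := h.exists_seq
    refine ⟨n, c, h0, hn, fun i hi ↦ ?_, fun i hi ↦ (hstep i hi).lt,
      fun i hi ↦ (hstep i hi).chief, fun i hi ↦ (hstep i hi).prime_dvd⟩
    cases i with
    | zero => exact h0 ▸ normal_bot
    | succ i => exact (hstep i hi).normal_right

theorem PartialPiProperty.map {G G' : Type} [Group G] [Group G'] [Finite G] {p : ℕ}
    [Fact p.Prime] {φ : G →* G'} (hφ : Function.Surjective φ) (hker : ¬ p ∣ Nat.card φ.ker)
    {A : Subgroup G} (hA : IsPGroup p A) (h : PartialPiProperty G A) :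
    PartialPiProperty G' (A.map φ) := by
  rw [partialPiProperty_iff_reflTransGen] at h ⊢
  rw [← map_bot φ, ← map_top_of_surjective φ hφ]
  refine Relation.ReflTransGen.lift' (Subgroup.map φ) (fun c c' hstep ↦ ?_) _ _ h
  change Relation.ReflTransGen _ (c.map φ) (c'.map φ)
  rcases hstep.map hφ hker hA with heq | hstep'
  · exact heq ▸ Relation.ReflTransGen.refl
  · exact .single hstep'

theorem PartialPiProperty.map_subgroupOf {G G' : Type} [Group G] [Group G'] [Finite G] {p : ℕ}
    [Fact p.Prime] (f : G →* G') (hker : ¬ p ∣ Nat.card f.ker) {L A : Subgroup G}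
    (hAL : A ≤ L) (hA : IsPGroup p A) (h : PartialPiProperty L (A.subgroupOf L)) :
    PartialPiProperty (L.map f) ((A.map f).subgroupOf (L.map f)) := by
  have hker' : ¬ p ∣ Nat.card (f.subgroupMap L).ker := fun hdvd ↦ hker <| hdvd.trans <| by
    rw [Subgroup.ker_subgroupMap]
    exact card_comap_dvd_of_injective _ _ L.subtype_injective
  have hmap : (A.subgroupOf L).map (f.subgroupMap L) = (A.map f).subgroupOf (L.map f) := by
    refine map_injective (L.map f).subtype_injective ?_
    rw [map_map, show (L.map f).subtype.comp (f.subgroupMap L) = f.comp L.subtype from rfl,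
      ← map_map, subgroupOf_map_subtype, subgroupOf_map_subtype, inf_of_le_left hAL,
      inf_of_le_left (map_mono hAL)]
  exact hmap ▸ h.map (f.subgroupMap_surjective L) hker' hA.comap_subtype

namespace QuotientGroup

variable {G : Type*} [Group G] {K P : Subgroup G} [K.Normal]

theorem map_mk'_comap_inf_of_le_map {M : Subgroup (G ⧸ K)} (hM : M ≤ P.map (mk' K)) :
    (M.comap (mk' K) ⊓ P).map (mk' K) = M := by
  refine le_antisymm ((map_mono inf_le_left).trans (map_comap_le _ _)) fun m hm ↦ ?_
  obtain ⟨x, hx, rfl⟩ := hM hm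
  exact ⟨x, ⟨hm, hx⟩, rfl⟩

theorem isCoatom_comap_mk'_inf_subgroupOf (hPK : Disjoint P K) {M : Subgroup (G ⧸ K)}
    (hM : IsCoatom (M.subgroupOf (P.map (mk' K)))) :
    IsCoatom ((M.comap (mk' K) ⊓ P).subgroupOf P) := by
  have hinj : Function.Injective ((mk' K).subgroupMap P) := by
    rw [← MonoidHom.ker_eq_bot_iff, Subgroup.ker_subgroupMap, ker_mk']
    exact subgroupOf_eq_bot.mpr hPK.symm
  let e : P ≃* P.map (mk' K) := MulEquiv.ofBijective _ ⟨hinj, (mk' K).subgroupMap_surjective P⟩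
  have he : (M.comap (mk' K) ⊓ P).subgroupOf P =
      e.comapSubgroup (M.subgroupOf (P.map (mk' K))) := by
    ext x
    exact ⟨fun hx ↦ hx.1, fun hx ↦ ⟨hx, x.2⟩⟩
  rwa [he, OrderIso.isCoatom_iff]

end QuotientGroup

theorem partialPi_max_quotient_pPrime_general (G : Type) [Group G] [Finite G] (p : ℕ)
    [Fact p.Prime] (H : Subgroup G) (P : Sylow p ↥H)
    (K : Subgroup G) [K.Normal] (hK : ¬ p ∣ Nat.card K)
    (Pg : Subgroup G) (hPg : Pg = (P : Subgroup ↥H).map H.subtype)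
    (h : ∀ M : Subgroup G, M ≤ Pg → IsCoatom (M.subgroupOf Pg) →
      PartialPiProperty ↥(Subgroup.normalizer (Pg : Set G)) (M.subgroupOf (Subgroup.normalizer (Pg : Set G)))) :
    ∀ M : Subgroup (G ⧸ K), M ≤ Pg.map (QuotientGroup.mk' K) →
      IsCoatom (M.subgroupOf (Pg.map (QuotientGroup.mk' K))) →
      PartialPiProperty ↥(Subgroup.normalizer ((Pg.map (QuotientGroup.mk' K) : Subgroup (G ⧸ K)) : Set (G ⧸ K)))
        (M.subgroupOf (Subgroup.normalizer ((Pg.map (QuotientGroup.mk' K) : Subgroup (G ⧸ K)) : Set (G ⧸ K)))) := by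
  intro M hMle hMco
  have hPg_pGroup : IsPGroup p Pg := hPg ▸ P.isPGroup'.map H.subtype
  have hM₀ := h _ inf_le_right
    (QuotientGroup.isCoatom_comap_mk'_inf_subgroupOf (hPg_pGroup.disjoint_of_not_dvd_card hK) hMco)
  have hM₀_image := hM₀.map_subgroupOf (QuotientGroup.mk' K)
    (by rwa [QuotientGroup.ker_mk']) (inf_le_right.trans le_normalizer)
    (hPg_pGroup.to_le inf_le_right)
  rwa [QuotientGroup.map_mk'_comap_inf_of_le_map hMle, hPg_pGroup.map_mk'_normalizer hK]
    at hM₀_image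

/-- Let `H ⊴ G`, `P` a Sylow `p`-subgroup of `H`, and `K ⊴ G` a normal `p'`-subgroup of
the finite group `G`. If every maximal subgroup of `P` satisfies the partial
`Π`-property in `N_G(P)`, then every maximal subgroup of `PK/K` satisfies the partial
`Π`-property in `N_{G/K}(PK/K)`. -/
theorem partialPi_max_quotient_pPrime (G : Type) [Group G] [Finite G] (p : ℕ)
    [Fact p.Prime] (H : Subgroup G) [H.Normal] (P : Sylow p ↥H)
    (K : Subgroup G) [K.Normal] (hK : ¬ p ∣ Nat.card K)
    (Pg : Subgroup G) (hPg : Pg = (P : Subgroup ↥H).map H.subtype)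
    (h : ∀ M : Subgroup G, M ≤ Pg → IsCoatom (M.subgroupOf Pg) →
      PartialPiProperty ↥(Subgroup.normalizer (Pg : Set G)) (M.subgroupOf (Subgroup.normalizer (Pg : Set G)))) :
    ∀ M : Subgroup (G ⧸ K), M ≤ Pg.map (QuotientGroup.mk' K) →
      IsCoatom (M.subgroupOf (Pg.map (QuotientGroup.mk' K))) →
      PartialPiProperty ↥(Subgroup.normalizer ((Pg.map (QuotientGroup.mk' K) : Subgroup (G ⧸ K)) : Set (G ⧸ K)))
        (M.subgroupOf (Subgroup.normalizer ((Pg.map (QuotientGroup.mk' K) : Subgroup (G ⧸ K)) : Set (G ⧸ K)))) :=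
  partialPi_max_quotient_pPrime_general G p H P K hK Pg hPg h
end

section
/- Let 𝔉 be a saturated formation containing the class of all supersoluble groups and E a cyclic normal subgroup of a finite group G with G/E ∈ 𝔉. Then G ∈ 𝔉. -/
/-- A finite group is supersoluble: it has a chain of normal subgroups with cyclic
factors (`c (i+1) = c i ⟨x⟩` for some `x`). -/
def IsSupersoluble (H : Type) [Group H] : Prop :=
  ∃ (n : ℕ) (c : ℕ → Subgroup H),
    c 0 = ⊥ ∧ c n = ⊤ ∧ (∀ i, i ≤ n → (c i).Normal) ∧
    (∀ i, i < n → c i ≤ c (i + 1)) ∧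
    (∀ i, i < n → ∃ x ∈ c (i + 1), c (i + 1) ≤ c i ⊔ Subgroup.zpowers x)

/-- `F` respects isomorphisms. -/
def RespectsIso (F : ∀ (H : Type) [Group H], Prop) : Prop :=
  ∀ (H K : Type) [Group H] [Group K], (H ≃* K) → F H → F K

/-- `F` is closed under quotients. -/
def QuotientClosed (F : ∀ (H : Type) [Group H], Prop) : Prop :=
  ∀ (H : Type) [Group H] (N : Subgroup H) [N.Normal], F H → F (H ⧸ N)

/-- `F` is closed under subdirect products: if `N₁ ∩ N₂ = 1` and both `H/N₁` and
`H/N₂` lie in `F`, then so does `H`. -/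
def SubdirectClosed (F : ∀ (H : Type) [Group H], Prop) : Prop :=
  ∀ (H : Type) [Group H] (N₁ N₂ : Subgroup H) [N₁.Normal] [N₂.Normal],
    N₁ ⊓ N₂ = ⊥ → F (H ⧸ N₁) → F (H ⧸ N₂) → F H

/-- `F` is saturated: if `H/N ∈ F` for some normal subgroup `N ≤ Φ(H)`, then `H ∈ F`. -/
def Saturated (F : ∀ (H : Type) [Group H], Prop) : Prop :=
  ∀ (H : Type) [Group H] [Finite H] (N : Subgroup H) [N.Normal],
    N ≤ frattini H → F (H ⧸ N) → F H

/-!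
Induct on `|G|`. A nontrivial cyclic `E` has a subgroup `N` of prime order `p`; it is
characteristic in `E`, hence normal in `G`, and `G/N ∈ 𝔉` by induction applied to `E/N`.
If `N ≤ Φ(G)`, saturation gives `G ∈ 𝔉`. Otherwise some maximal subgroup `M` complements `N`.
Then `D = M ∩ C_G(N)` is normal, meets `N` trivially, and `C_G(N) = N D`; so `G/D` has the
normal subgroup `C_G(N)/D ≅ N` of order `p` with quotient `G/C_G(N) ↪ Aut(N) ≅ C_{p-1}`.
Thus `G/D` is supersoluble, and `G` is a subdirect product of `G/N` and `G/D`.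
-/

section

open Subgroup QuotientGroup

section

variable {G : Type*} [Group G]

theorem isCyclic_mulAut_of_card_eq_prime {p : ℕ} (hp : p.Prime) (h : Nat.card G = p) :
    IsCyclic (MulAut G) := by
  have : Fact p.Prime := ⟨hp⟩
  have : IsCyclic G := isCyclic_of_prime_card h
  have := ZMod.isCyclic_units_prime hp
  rw [← h] at this
  exact isCyclic_of_surjective (IsCyclic.mulAutMulEquiv G).symm (MulEquiv.surjective _)

theorem Subgroup.isAtom_of_card_eq_prime {N : Subgroup G} {p : ℕ} (hp : p.Prime)
    (h : Nat.card N = p) : IsAtom N := by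
  have : Finite N := Nat.finite_of_card_ne_zero (h ▸ hp.ne_zero)
  refine ⟨fun hN => hp.ne_one (by rw [← h, hN, card_bot]), fun K hK => card_eq_one.mp ?_⟩
  refine (hp.eq_one_or_self_of_dvd _ (h ▸ card_dvd_of_le hK.le)).resolve_right fun hK' => ?_
  exact hK.ne (eq_of_le_of_card_ge hK.le (by rw [h, hK']))

theorem MulAut.ker_conjNormal (N : Subgroup G) [N.Normal] :
    (MulAut.conjNormal : G →* MulAut N).ker = centralizer (N : Set G) := by
  ext g
  simp only [MonoidHom.mem_ker, mem_centralizer_iff, MulEquiv.ext_iff, Subtype.ext_iff,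
    MulAut.conjNormal_apply, MulAut.one_apply, Subtype.forall, SetLike.mem_coe]
  refine forall₂_congr fun h _ => ?_
  rw [mul_inv_eq_iff_eq_mul, eq_comm]

theorem isCyclic_quotient_centralizer_of_card_eq_prime (N : Subgroup G) [N.Normal] {p : ℕ}
    (hp : p.Prime) (h : Nat.card N = p) : IsCyclic (G ⧸ centralizer (N : Set G)) := by
  have := isCyclic_mulAut_of_card_eq_prime hp h
  let e := (quotientMulEquivOfEq (MulAut.ker_conjNormal N).symm).trans
    (quotientKerEquivRange (MulAut.conjNormal : G →* MulAut N))
  exact isCyclic_of_surjective e.symm e.symm.surjective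

theorem exists_normal_le_card_eq_of_dvd (E : Subgroup G) [E.Normal] [Finite E] [IsCyclic E]
    {d : ℕ} (hd : d ∣ Nat.card E) : ∃ N : Subgroup G, N.Normal ∧ N ≤ E ∧ Nat.card N = d := by
  let := IsCyclic.commGroup (α := E)
  let K := (powMonoidHom d : E →* E).ker
  have : K.Characteristic := characteristic_iff_le_comap.mpr fun ϕ x hx => by
    simp_all [K, ← map_pow]
  refine ⟨K.map E.subtype, inferInstance, map_subtype_le K, ?_⟩
  rw [card_map_of_injective E.subtype_injective, IsCyclic.card_powMonoidHom_ker,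
    Nat.gcd_eq_right hd]

theorem exists_isCoatom_not_le_of_not_le_frattini {N : Subgroup G} (h : ¬ N ≤ frattini G) :
    ∃ M, IsCoatom M ∧ ¬ N ≤ M := by
  by_contra! hM
  exact h (le_iInf₂ hM)

theorem normal_inf_centralizer_of_sup_eq_top {N M : Subgroup G} [N.Normal] (h : N ⊔ M = ⊤) :
    (M ⊓ centralizer (N : Set G)).Normal := by
  rw [← normalizer_eq_top_iff, eq_top_iff, ← h, sup_le_iff]
  refine ⟨le_centralizer_iff.mp inf_le_right |>.trans (centralizer_le_normalizer _), ?_⟩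
  refine le_trans (le_inf le_normalizer ?_) inf_normalizer_le_normalizer_inf
  rw [normalizer_eq_top_iff.mpr inferInstance]
  exact le_top

theorem centralizer_le_sup_inf_centralizer {N M : Subgroup G} [N.Normal]
    (hN : N ≤ centralizer (N : Set G)) (h : N ⊔ M = ⊤) :
    centralizer (N : Set G) ≤ N ⊔ (M ⊓ centralizer (N : Set G)) := by
  rw [← SetLike.coe_subset_coe, normal_mul, mul_inf_assoc _ _ _ hN, ← normal_mul, h, coe_top,
    Set.univ_inter]

end

section

variable {G : Type} [Group G]

theorem isSupersoluble_of_isCyclic_of_isCyclic_quotient (K : Subgroup G)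
    [K.Normal] [IsCyclic K] [IsCyclic (G ⧸ K)] : IsSupersoluble G := by
  obtain ⟨g, hg⟩ := K.isCyclic_iff_exists_zpowers_eq_top.mp ‹_›
  obtain ⟨q, hq⟩ := isCyclic_iff_exists_zpowers_eq_top.mp ‹IsCyclic (G ⧸ K)›
  obtain ⟨x, rfl⟩ := mk_surjective q
  have hx : K ⊔ zpowers x = ⊤ := by
    rw [sup_comm, ← ker_mk' K, ← comap_map_eq, MonoidHom.map_zpowers]
    exact (congrArg _ hq).trans (comap_top _)
  refine ⟨2, fun i => if i = 0 then ⊥ else if i = 1 then K else ⊤, rfl, rfl, ?_, ?_, ?_⟩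
  · intro i _
    dsimp only
    split_ifs <;> infer_instance
  · intro i hi
    interval_cases i <;> simp
  · intro i hi
    interval_cases i
    · exact ⟨g, hg ▸ mem_zpowers g, by simp [hg]⟩
    · exact ⟨x, mem_top x, by simp [hx]⟩

theorem isSupersoluble_quotient_of_centralizer_le_sup {N D : Subgroup G}
    [N.Normal] [D.Normal] {p : ℕ} (hp : p.Prime) (hN : Nat.card N = p)
    (hDC : D ≤ centralizer (N : Set G)) (hCND : centralizer (N : Set G) ≤ N ⊔ D) :
    IsSupersoluble (G ⧸ D) := by
  let K := (centralizer (N : Set G)).map (mk' D)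
  have : K.Normal := Normal.map inferInstance _ (mk'_surjective D)
  have : IsCyclic (N.map (mk' D)) := by
    have : IsCyclic N := isCyclic_of_prime_card (hp := ⟨hp⟩) hN
    exact isCyclic_of_surjective _ ((mk' D).subgroupMap_surjective N)
  have hKN : K ≤ N.map (mk' D) := by
    refine (map_mono hCND).trans ?_
    rw [Subgroup.map_sup, map_mk'_self, sup_bot_eq]
  have : IsCyclic K := isCyclic_of_le hKN
  have := isCyclic_quotient_centralizer_of_card_eq_prime N hp hN
  let e := quotientQuotientEquivQuotient D _ hDC
  have : IsCyclic ((G ⧸ D) ⧸ K) := isCyclic_of_surjective e.symm e.symm.surjective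
  exact isSupersoluble_of_isCyclic_of_isCyclic_quotient K

theorem mem_of_card_eq_prime_of_not_le_frattini (F : ∀ (H : Type) [Group H], Prop)
    (hsd : SubdirectClosed F) (hU : ∀ (H : Type) [Group H] [Finite H], IsSupersoluble H → F H)
    [Finite G] {N : Subgroup G} [N.Normal] {p : ℕ} (hp : p.Prime)
    (hN : Nat.card N = p) (hΦ : ¬ N ≤ frattini G) (hGN : F (G ⧸ N)) : F G := by
  obtain ⟨M, hM, hNM⟩ := exists_isCoatom_not_le_of_not_le_frattini hΦ
  have hsup : N ⊔ M = ⊤ := codisjoint_iff.mp (hM.not_le_iff_codisjoint.mp hNM).symm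
  have hdisj : Disjoint N M := (isAtom_of_card_eq_prime hp hN).not_le_iff_disjoint.mp hNM
  have hNC : N ≤ centralizer (N : Set G) := by
    have : IsCyclic N := isCyclic_of_prime_card (hp := ⟨hp⟩) hN
    exact le_centralizer_iff_isMulCommutative.mpr inferInstance
  have := normal_inf_centralizer_of_sup_eq_top hsup
  refine hsd G N (M ⊓ centralizer (N : Set G)) ?_ hGN (hU _ ?_)
  · exact disjoint_iff.mp (hdisj.mono_right inf_le_left)
  · exact isSupersoluble_quotient_of_centralizer_le_sup hp hN inf_le_right
      (centralizer_le_sup_inf_centralizer hNC hsup)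

end

end

theorem mem_formation_of_cyclic_normal_general (F : ∀ (H : Type) [Group H], Prop)
    (hiso : RespectsIso F) (hsd : SubdirectClosed F)
    (hsat : Saturated F)
    (hU : ∀ (H : Type) [Group H] [Finite H], IsSupersoluble H → F H)
    (G : Type) [Group G] [Finite G] (E : Subgroup G) [E.Normal]
    (hE : IsCyclic ↥E) (hGE : F (G ⧸ E)) :
    F G := by
  induction hn : Nat.card G using Nat.strong_induction_on generalizing G with
  | _ n ih =>
    subst hn
    rcases eq_or_ne E ⊥ with rfl | hE_ne
    · exact hiso _ _ QuotientGroup.quotientBot hGE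
    obtain ⟨p, hp, hpE⟩ := Nat.exists_prime_and_dvd (mt Subgroup.card_eq_one.mp hE_ne)
    obtain ⟨N, _, hNE, hNp⟩ := exists_normal_le_card_eq_of_dvd E hpE
    have hlt : Nat.card (G ⧸ N) < Nat.card G := by
      rw [← N.index_mul_card, hNp]
      exact lt_mul_of_one_lt_right (Nat.pos_of_ne_zero N.index_ne_zero_of_finite) hp.one_lt
    have hGN : F (G ⧸ N) :=
      let π := QuotientGroup.mk' N
      ih _ hlt (G ⧸ N) (E.map π) (isCyclic_of_surjective _ (π.subgroupMap_surjective E))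
        (hiso _ _ (QuotientGroup.quotientQuotientEquivQuotient N E hNE).symm hGE) rfl
    by_cases hΦ : N ≤ frattini G
    · exact hsat G N hΦ hGN
    · exact mem_of_card_eq_prime_of_not_le_frattini F hsd hU hp hNp hΦ hGN

/-- Let `𝔉` be a saturated formation containing all supersoluble groups, and `E` a
cyclic normal subgroup of the finite group `G` with `G/E ∈ 𝔉`. Then `G ∈ 𝔉`. -/
theorem mem_formation_of_cyclic_normal (F : ∀ (H : Type) [Group H], Prop)
    (hiso : RespectsIso F) (hq : QuotientClosed F) (hsd : SubdirectClosed F)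
    (hsat : Saturated F)
    (hU : ∀ (H : Type) [Group H] [Finite H], IsSupersoluble H → F H)
    (G : Type) [Group G] [Finite G] (E : Subgroup G) [E.Normal]
    (hE : IsCyclic ↥E) (hGE : F (G ⧸ E)) :
    F G :=
  mem_formation_of_cyclic_normal_general F hiso hsd hsat hU G E hE hGE
end
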